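/- Let 𝕜 be a field, V and W vector spaces over 𝕜, and v ∈ V ⊗ W. Suppose v = Σ_{i=1}^{r} u_i ⊗ w_i where (u_1,…,u_r) is a basis of the left minimal subspace U_V(v) (i.e. the u_i are linearly independent and span U_V(v)). Then (w_1,…,w_r) is a basis of the right minimal subspace U_W(v): the w_i are linearly independent and U_W(v) = span{w_1,…,w_r}. -/

import Mathlib

open scoped TensorProduct

section
variable (𝕜 : Type*) [Field 𝕜]

/-- The contraction `id_V ⊗ φ : V ⊗ W → V`, sending `x ⊗ y` to `φ(y) • x`. -/
noncomputable def rContract (V W : Type*) [AddCommGroup V] [Module 𝕜 V]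
    [AddCommGroup W] [Module 𝕜 W] (φ : W →ₗ[𝕜] 𝕜) : V ⊗[𝕜] W →ₗ[𝕜] V :=
  (TensorProduct.rid 𝕜 V).toLinearMap ∘ₗ TensorProduct.map LinearMap.id φ

/-- The contraction `ψ ⊗ id_W : V ⊗ W → W`, sending `x ⊗ y` to `ψ(x) • y`. -/
noncomputable def lContract (V W : Type*) [AddCommGroup V] [Module 𝕜 V]
    [AddCommGroup W] [Module 𝕜 W] (ψ : V →ₗ[𝕜] 𝕜) : V ⊗[𝕜] W →ₗ[𝕜] W :=
  (TensorProduct.lid 𝕜 W).toLinearMap ∘ₗ TensorProduct.map ψ LinearMap.id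

/-- The left minimal subspace `U_V(v)` of `v ∈ V ⊗ W`: the span of all contractions
`(id_V ⊗ φ)(v)` with `φ` in the algebraic dual of `W`. -/
noncomputable def leftMin (V W : Type*) [AddCommGroup V] [Module 𝕜 V]
    [AddCommGroup W] [Module 𝕜 W] (v : V ⊗[𝕜] W) : Submodule 𝕜 V :=
  Submodule.span 𝕜 {x | ∃ φ : W →ₗ[𝕜] 𝕜, rContract 𝕜 V W φ v = x}

/-- The right minimal subspace `U_W(v)` of `v ∈ V ⊗ W`: the span of all contractions
`(ψ ⊗ id_W)(v)` with `ψ` in the algebraic dual of `V`. -/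
noncomputable def rightMin (V W : Type*) [AddCommGroup V] [Module 𝕜 V]
    [AddCommGroup W] [Module 𝕜 W] (v : V ⊗[𝕜] W) : Submodule 𝕜 W :=
  Submodule.span 𝕜 {y | ∃ ψ : V →ₗ[𝕜] 𝕜, lContract 𝕜 V W ψ v = y}

end

/-!
Write `v = ∑ i, u i ⊗ w i`. Contracting on the left gives `(ψ ⊗ id)(v) = ∑ i, ψ (u i) • w i`,
so `U_W(v) ⊆ span w`, and since `u` is linearly independent there are functionals `ψ_j` with
`ψ_j (u i) = δ_ij`, whose contractions are exactly the `w j`. For the independence of `w`: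
each `u j` lies in `U_V(v)`, which is already the set of contractions `∑ i, φ (w i) • u i`
(no span needed, as `φ ↦ (id ⊗ φ)(v)` is linear); independence of `u` forces `φ_j (w i) = δ_ij`,
and a family admitting such a biorthogonal system of functionals is linearly independent.
-/

section Biorthogonal
variable {R M ι : Type*} [Semiring R] [AddCommMonoid M] [Module R M]

theorem LinearIndependent.of_biorthogonal [DecidableEq ι] {w : ι → M} (φ : ι → M →ₗ[R] R)
    (h : ∀ i j, φ j (w i) = (Pi.single i 1 : ι → R) j) : LinearIndependent R w := by
  have hpi : LinearMap.pi φ ∘ w = fun i => Pi.single i (1 : R) := funext fun i => funext (h i)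
  exact .of_comp (LinearMap.pi φ) (hpi ▸ Pi.linearIndependent_single_one ι R)

theorem LinearIndependent.eq_single_of_sum_smul_eq [Fintype ι] [DecidableEq ι] {u : ι → M}
    (hu : LinearIndependent R u) {f : ι → R} {j : ι} (h : ∑ i, f i • u i = u j) :
    f = Pi.single j 1 := by
  refine funext (Fintype.linearIndependent_iffₛ.mp hu f (Pi.single j 1) ?_)
  simp [h, Pi.single_apply]

end Biorthogonal

theorem LinearIndependent.exists_dual_eq_single {𝕜 V ι : Type*} [Field 𝕜] [AddCommGroup V]
    [Module 𝕜 V] {u : ι → V} (hu : LinearIndependent 𝕜 u) :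
    ∃ c : V →ₗ[𝕜] ι →₀ 𝕜, ∀ i, c (u i) = Finsupp.single i 1 := by
  obtain ⟨c, hc⟩ := LinearMap.exists_extend hu.repr
  refine ⟨c, fun i => ?_⟩
  have hui : u i ∈ Submodule.span 𝕜 (Set.range u) := Submodule.subset_span ⟨i, rfl⟩
  rw [← hu.repr_eq_single i ⟨u i, hui⟩ rfl, ← hc]
  rfl

section
variable {𝕜 V W : Type*} [Field 𝕜] [AddCommGroup V] [Module 𝕜 V]
  [AddCommGroup W] [Module 𝕜 W]

@[simp]
theorem rContract_tmul (φ : W →ₗ[𝕜] 𝕜) (x : V) (y : W) :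
    rContract 𝕜 V W φ (x ⊗ₜ y) = φ y • x := by
  simp [rContract]

@[simp]
theorem lContract_tmul (ψ : V →ₗ[𝕜] 𝕜) (x : V) (y : W) :
    lContract 𝕜 V W ψ (x ⊗ₜ y) = ψ x • y := by
  simp [lContract]

theorem mem_leftMin_iff {v : V ⊗[𝕜] W} {x : V} :
    x ∈ leftMin 𝕜 V W v ↔ ∃ φ : W →ₗ[𝕜] 𝕜, rContract 𝕜 V W φ v = x := by
  let T : (W →ₗ[𝕜] 𝕜) →ₗ[𝕜] V :=
    { toFun := fun φ => rContract 𝕜 V W φ v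
      map_add' := fun φ φ' => by simp [rContract, TensorProduct.map_add_right]
      map_smul' := fun c φ => by simp [rContract, TensorProduct.map_smul_right] }
  change x ∈ Submodule.span 𝕜 (LinearMap.range T : Set V) ↔ x ∈ LinearMap.range T
  rw [Submodule.span_eq]

section SumTmul
variable {ι : Type*} [Fintype ι] (u : ι → V) (w : ι → W)

theorem rightMin_sum_tmul_le_span :
    rightMin 𝕜 V W (∑ i, u i ⊗ₜ w i) ≤ Submodule.span 𝕜 (Set.range w) := by
  refine Submodule.span_le.mpr ?_
  rintro _ ⟨ψ, rfl⟩
  simp only [map_sum, lContract_tmul]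
  exact Submodule.sum_mem _ fun i _ => Submodule.smul_mem _ _ (Submodule.subset_span ⟨i, rfl⟩)

theorem span_le_rightMin_sum_tmul (hu : LinearIndependent 𝕜 u) :
    Submodule.span 𝕜 (Set.range w) ≤ rightMin 𝕜 V W (∑ i, u i ⊗ₜ w i) := by
  classical
  obtain ⟨c, hc⟩ := hu.exists_dual_eq_single
  refine Submodule.span_le.mpr ?_
  rintro _ ⟨j, rfl⟩
  refine Submodule.subset_span ⟨Finsupp.lapply j ∘ₗ c, ?_⟩
  simp [hc, Finsupp.single_apply]

theorem linearIndependent_of_forall_mem_leftMin_sum_tmul (hu : LinearIndependent 𝕜 u)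
    (h : ∀ j, u j ∈ leftMin 𝕜 V W (∑ i, u i ⊗ₜ w i)) : LinearIndependent 𝕜 w := by
  classical
  choose φ hφ using fun j => mem_leftMin_iff.mp (h j)
  refine LinearIndependent.of_biorthogonal φ fun i j => ?_
  have hcoeff := hu.eq_single_of_sum_smul_eq (f := fun i => φ j (w i)) (j := j)
    (by simpa only [map_sum, rContract_tmul] using hφ j)
  rw [congrFun hcoeff i, Pi.single_comm]

end SumTmul

theorem rightMin_basis_of_leftMin_basis {r : ℕ} (u : Fin r → V) (w : Fin r → W)
    (v : V ⊗[𝕜] W) (hv : v = ∑ i, u i ⊗ₜ[𝕜] w i)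
    (hu_li : LinearIndependent 𝕜 u)
    (hu_span : Submodule.span 𝕜 (Set.range u) = leftMin 𝕜 V W v) :
    LinearIndependent 𝕜 w ∧ rightMin 𝕜 V W v = Submodule.span 𝕜 (Set.range w) := by
  subst hv
  refine ⟨linearIndependent_of_forall_mem_leftMin_sum_tmul u w hu_li fun j => ?_,
    le_antisymm (rightMin_sum_tmul_le_span u w) (span_le_rightMin_sum_tmul u w hu_li)⟩
  exact hu_span ▸ Submodule.subset_span ⟨j, rfl⟩

end
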